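/- For any set function f : 2^V → ℝ≥0, any point (p_1,…,p_K) ∈ ∏_{k=1}^K Δ_{n_k}, any indices k_1 ≠ k_2 in {1,…,K}, and any m_1 ∈ {1,…,n_{k_1}}, m_2 ∈ {1,…,n_{k_2}}, the second-order partial derivative of the Multinoulli Extension satisfies ∂²F/∂p_{k_1}^{m_1}∂p_{k_2}^{m_2} (p_1,…,p_K) = B_{k_1}·B_{k_2} · E[ f(v_{k_1}^{m_1} | S ∪ {v_{k_2}^{m_2}}) − f(v_{k_1}^{m_1} | S) ], where S = ∪_{(k̂,b̂) ∉ {(k_1,1),(k_2,1)}} {e_{k̂}^{b̂}}, the union ranges over all pairs (k̂,b̂) with k̂ ∈ {1,…,K}, b̂ ∈ {1,…,B_{k̂}} except (k_1,1) and (k_2,1), and the random elements e_{k̂}^{b̂} are mutually independent with e_{k̂}^{b̂} ∼ Multi(p_{k̂}). -/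

import Mathlib

/-! The extension is multi-affine in the trial distributions. Differentiating the product of
the independent factors in the coordinate `v_k^m` replaces, one trial `e_k^b` at a time, the law
`Multi(p_k)` by the signed measure `δ_{v_k^m} - δ_∅`, so
`∂F/∂p_k^m = Σ_b E[f(S[e_k^b := v_k^m]) - f(S[e_k^b := ∅])]`. Differentiating again in a
different community touches a different trial, and the two nested differences of `f` combine to
the second-order marginal `f(v₁ | S' ∪ {v₂}) - f(v₁ | S')` over the remaining trials `S'`. Trials of
one community are i.i.d., so all `B_{k₁} B_{k₂}` terms equal the one for `b₁ = b₂ = 1`. -/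

open Finset

noncomputable section

namespace Multinoulli

variable {K : ℕ}

/-- An element of the ground set `V`: a community index `k` together with the
index `m` of the element `v_k^m` inside its community `V_k`. -/
abbrev Elem (n : Fin K → ℕ) := Σ k : Fin K, Fin (n k)

/-- A sampling slot: a community `k` together with a trial index `b ∈ {1,…,B_k}`. -/
abbrev Slot (B : Fin K → ℕ) := Σ k : Fin K, Fin (B k)

/-- A joint outcome of all the independent multinoulli trials; `none` encodes a
draw of `∅`, which contributes no element. -/
abbrev Choice (n B : Fin K → ℕ) := ∀ s : Slot B, Option (Fin (n s.1))

/-- The probability that `Multi(p_k)` (the `k`-th block of `x`) assigns to a given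
outcome: `x ⟨k,m⟩` for the element `v_k^m` and `1 - Σ_m x ⟨k,m⟩` for `∅`. -/
def prob (n : Fin K → ℕ) (x : Elem n → ℝ) (k : Fin K) : Option (Fin (n k)) → ℝ
  | some m => x ⟨k, m⟩
  | none => 1 - ∑ m : Fin (n k), x ⟨k, m⟩

/-- The probability of the joint outcome `e` (all trials are mutually independent). -/
def jointProb (n B : Fin K → ℕ) (x : Elem n → ℝ) (e : Choice n B) : ℝ :=
  ∏ s : Slot B, prob n x s.1 (e s)

/-- The subset of the ground set selected by the trials whose slot lies in `A`
(a draw of `∅` contributes no element to the union). -/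
def chosen (n B : Fin K → ℕ) (e : Choice n B) (A : Finset (Slot B)) : Finset (Elem n) :=
  A.biUnion fun s => ((e s).map fun m => (⟨s.1, m⟩ : Elem n)).toFinset

/-- The Multinoulli Extension `F` of the set function `f`:
`F(x) = E[f(∪_{k,b} {e_k^b})]` for mutually independent `e_k^b ∼ Multi(p_k)`. -/
def ME (n B : Fin K → ℕ) (f : Finset (Elem n) → ℝ) (x : Elem n → ℝ) : ℝ :=
  ∑ e : Choice n B, f (chosen n B e Finset.univ) * jointProb n B x e

/-- The first-order partial derivative `∂G/∂x_i` at `x`. -/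
def pderiv (n : Fin K → ℕ) (G : (Elem n → ℝ) → ℝ) (i : Elem n) (x : Elem n → ℝ) : ℝ :=
  deriv (fun t => G (Function.update x i t)) (x i)

/-- The gradient `∇G(x)`. -/
def grad (n : Fin K → ℕ) (G : (Elem n → ℝ) → ℝ) (x : Elem n → ℝ) : Elem n → ℝ :=
  fun i => pderiv n G i x

/-- The second-order partial derivative `∂²G/∂x_i∂x_j` at `x`. -/
def pderiv2 (n : Fin K → ℕ) (G : (Elem n → ℝ) → ℝ) (i j : Elem n) (x : Elem n → ℝ) : ℝ :=
  pderiv n (fun y => pderiv n G j y) i x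

/-- The Euclidean inner product on `∏_k ℝ^{n_k}`. -/
def inner' (n : Fin K → ℕ) (u v : Elem n → ℝ) : ℝ := ∑ i : Elem n, u i * v i

/-- Membership in the product of simplices `∏_{k=1}^K Δ_{n_k}`. -/
def InSimplex (n : Fin K → ℕ) (x : Elem n → ℝ) : Prop :=
  (∀ i, 0 ≤ x i) ∧ ∀ k : Fin K, ∑ m : Fin (n k), x ⟨k, m⟩ ≤ 1

/-- Feasibility for the partition constraint: `|S ∩ V_k| ≤ B_k` for all `k`. -/
def Feasible (n B : Fin K → ℕ) (S : Finset (Elem n)) : Prop :=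
  ∀ k : Fin K, (S.filter fun i => i.1 = k).card ≤ B k

/-- Monotonicity of a set function. -/
def MonotoneSet (n : Fin K → ℕ) (f : Finset (Elem n) → ℝ) : Prop :=
  ∀ A B : Finset (Elem n), A ⊆ B → f A ≤ f B

/-- The marginal contribution `f(v|A) = f(A ∪ {v}) - f(A)`. -/
def marg (n : Fin K → ℕ) (f : Finset (Elem n) → ℝ) (v : Elem n) (A : Finset (Elem n)) : ℝ :=
  f (insert v A) - f A

/-- `α`-weak DR-submodularity: `f(v|A) ≥ α·f(v|B)` for all `A ⊆ B` and `v ∉ B`. -/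
def WeaklyDR (n : Fin K → ℕ) (f : Finset (Elem n) → ℝ) (α : ℝ) : Prop :=
  ∀ A B : Finset (Elem n), A ⊆ B → ∀ v, v ∉ B → α * marg n f v B ≤ marg n f v A

/-- `γ`-weak submodularity from below. -/
def WeaklyBelow (n : Fin K → ℕ) (f : Finset (Elem n) → ℝ) (γ : ℝ) : Prop :=
  ∀ A B : Finset (Elem n), A ⊆ B → γ * (f B - f A) ≤ ∑ v ∈ B \ A, marg n f v A

/-- `β`-weak submodularity from above. -/
def WeaklyAbove (n : Fin K → ℕ) (f : Finset (Elem n) → ℝ) (β : ℝ) : Prop :=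
  ∀ A B : Finset (Elem n), A ⊆ B → ∑ v ∈ B \ A, marg n f v (B.erase v) ≤ β * (f B - f A)

/-- The scaled indicator vector `Σ_{k=1}^K (1/B_k)·1_{S∩V_k}`. -/
def indVec (n B : Fin K → ℕ) (S : Finset (Elem n)) : Elem n → ℝ :=
  fun i => if i ∈ S then ((B i.1 : ℝ))⁻¹ else 0

theorem _root_.Fintype.sum_mul_apply_eq_of_sum_eq {ι : Type*} [Fintype ι] [DecidableEq ι]
    {α : ι → Type*} [∀ i, Fintype (α i)] (i : ι) {φ : (∀ j, α j) → ℝ}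
    (hφ : ∀ e a, φ (Function.update e i a) = φ e) {w w' : α i → ℝ}
    (hw : ∑ a, w a = ∑ a, w' a) :
    ∑ e, φ e * w (e i) = ∑ e, φ e * w' (e i) := by
  let ψ := (Equiv.piSplitAt i α).symm
  have hψ : ∀ a b r, φ (ψ (a, r)) = φ (ψ (b, r)) := fun a b r => by
    rw [← hφ (ψ (b, r)) a]
    congr 1
    ext j
    by_cases h : j = i
    · subst h; simp [ψ]
    · simp [ψ, h]
  have hψi : ∀ a r, ψ (a, r) i = a := fun a r => by simp [ψ]
  rw [← ψ.sum_comp, ← ψ.sum_comp, Fintype.sum_prod_type_right, Fintype.sum_prod_type_right]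
  refine Fintype.sum_congr _ _ fun r => ?_
  rcases isEmpty_or_nonempty (α i) with hα | ⟨⟨b⟩⟩
  · simp
  · simp only [hψi, hψ _ b r, ← mul_sum, hw]

section Probabilities

variable {n : Fin K → ℕ}

lemma sum_prob (x : Elem n → ℝ) (k : Fin K) : ∑ o, prob n x k o = 1 := by
  simp [Fintype.sum_option, prob]

lemma _root_.Function.update_apply_eq_add_mul_single {ι : Type*} [DecidableEq ι] (x : ι → ℝ)
    (i j : ι) (t : ℝ) :
    Function.update x i t j = x j + (t - x i) * (Pi.single i 1 : ι → ℝ) j := by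
  by_cases h : j = i
  · subst h; simp
  · simp [h]

/-- `prob n · k o` is affine, so this is its derivative along the coordinate `i`. -/
def probSlope (n : Fin K → ℕ) (i : Elem n) (k : Fin K) (o : Option (Fin (n k))) : ℝ :=
  prob n (Pi.single i 1) k o - prob n 0 k o

lemma prob_update (x : Elem n → ℝ) (i : Elem n) (t : ℝ) (k : Fin K)
    (o : Option (Fin (n k))) :
    prob n (Function.update x i t) k o = prob n x k o + (t - x i) * probSlope n i k o := by
  cases o with
  | some m => simp [probSlope, prob, Function.update_apply_eq_add_mul_single x i]
  | none =>
    simp only [probSlope, prob, Function.update_apply_eq_add_mul_single x i, sum_add_distrib,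
      ← mul_sum, Pi.zero_apply, sum_const_zero]
    ring

lemma hasDerivAt_prob_update (x : Elem n → ℝ) (i : Elem n) (t : ℝ) (k : Fin K)
    (o : Option (Fin (n k))) :
    HasDerivAt (fun t => prob n (Function.update x i t) k o) (probSlope n i k o) t := by
  simp_rw [prob_update]
  simpa using ((hasDerivAt_id t).sub_const (x i)).mul_const (probSlope n i k o)
    |>.const_add (prob n x k o)

lemma probSlope_self (k : Fin K) (m : Fin (n k)) (o : Option (Fin (n k))) :
    probSlope n ⟨k, m⟩ k o = (if o = some m then 1 else 0) - if o = none then 1 else 0 := by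
  cases o with
  | some m' => by_cases h : m' = m <;> simp [probSlope, prob, h]
  | none => simp [probSlope, prob, Pi.single_apply]

lemma probSlope_of_ne {k k' : Fin K} (m : Fin (n k)) (h : k' ≠ k) (o : Option (Fin (n k'))) :
    probSlope n ⟨k, m⟩ k' o = 0 := by
  cases o <;> simp [probSlope, prob, h]

end Probabilities

section Expectation

variable {n B : Fin K → ℕ}

variable (n B) in
def expectation (g : Choice n B → ℝ) (x : Elem n → ℝ) : ℝ :=
  ∑ e : Choice n B, g e * jointProb n B x e

lemma ME_eq_expectation (f : Finset (Elem n) → ℝ) :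
    ME n B f = expectation n B fun e => f (chosen n B e univ) :=
  rfl

variable (n B) in
def jointProbExcept (s : Slot B) (x : Elem n → ℝ) (e : Choice n B) : ℝ :=
  ∏ s' ∈ univ.erase s, prob n x s'.1 (e s')

lemma jointProb_eq_prob_mul_jointProbExcept (s : Slot B) (x : Elem n → ℝ) (e : Choice n B) :
    jointProb n B x e = prob n x s.1 (e s) * jointProbExcept n B s x e :=
  (mul_prod_erase univ _ (mem_univ s)).symm

lemma jointProbExcept_update (s : Slot B) (x : Elem n → ℝ) (e : Choice n B)
    (o : Option (Fin (n s.1))) :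
    jointProbExcept n B s x (Function.update e s o) = jointProbExcept n B s x e :=
  prod_congr rfl fun _ hs' => by rw [Function.update_of_ne (ne_of_mem_erase hs')]

lemma hasDerivAt_jointProb_update (x : Elem n → ℝ) (i : Elem n) (e : Choice n B) :
    HasDerivAt (fun t => jointProb n B (Function.update x i t) e)
      (∑ s, jointProbExcept n B s x e * probSlope n i s.1 (e s)) (x i) := by
  simpa only [jointProb, jointProbExcept, Function.update_eq_self, smul_eq_mul] using
    HasDerivAt.fun_finsetProd (u := univ)
    fun s _ => hasDerivAt_prob_update x i (x i) s.1 (e s)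

lemma sum_mul_ite_mul_jointProbExcept (s : Slot B) (o : Option (Fin (n s.1)))
    (φ : Choice n B → ℝ) (x : Elem n → ℝ) :
    ∑ e, φ e * (if e s = o then 1 else 0) * jointProbExcept n B s x e
      = expectation n B (fun e => φ (Function.update e s o)) x := by
  have hφ : ∀ e, φ e * (if e s = o then 1 else 0)
      = φ (Function.update e s o) * (if e s = o then 1 else 0) := fun e => by
    split_ifs with h
    · rw [← h, Function.update_eq_self]
    · simp
  have hw : ∑ o', (if o' = o then (1 : ℝ) else 0) = ∑ o', prob n x s.1 o' := by
    rw [sum_prob]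
    simp
  calc ∑ e, φ e * (if e s = o then 1 else 0) * jointProbExcept n B s x e
      = ∑ e, φ (Function.update e s o) * jointProbExcept n B s x e
          * (if e s = o then 1 else 0) := by
        refine sum_congr rfl fun e _ => ?_
        rw [hφ]; ring
    _ = ∑ e, φ (Function.update e s o) * jointProbExcept n B s x e * prob n x s.1 (e s) :=
        Fintype.sum_mul_apply_eq_of_sum_eq
          (φ := fun e => φ (Function.update e s o) * jointProbExcept n B s x e) s
          (fun e o' => by rw [Function.update_idem, jointProbExcept_update]) hw
    _ = _ := sum_congr rfl fun e _ => by
        rw [jointProb_eq_prob_mul_jointProbExcept s]; ring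

variable (B) in
def slotDiff (k : Fin K) (m : Fin (n k)) (g : Choice n B → ℝ) (e : Choice n B) : ℝ :=
  ∑ b : Fin (B k), (g (Function.update e ⟨k, b⟩ (some m)) - g (Function.update e ⟨k, b⟩ none))

lemma expectation_sum {ι : Type*} (t : Finset ι) (g : ι → Choice n B → ℝ) (x : Elem n → ℝ) :
    expectation n B (fun e => ∑ i ∈ t, g i e) x = ∑ i ∈ t, expectation n B (g i) x := by
  simp only [expectation, sum_mul]
  exact sum_comm

lemma expectation_sub (g h : Choice n B → ℝ) (x : Elem n → ℝ) :
    expectation n B (fun e => g e - h e) x = expectation n B g x - expectation n B h x := by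
  simp only [expectation, sub_mul, sum_sub_distrib]

lemma hasDerivAt_expectation_update (g : Choice n B → ℝ) (k : Fin K) (m : Fin (n k))
    (x : Elem n → ℝ) :
    HasDerivAt (fun t => expectation n B g (Function.update x ⟨k, m⟩ t))
      (expectation n B (slotDiff B k m g) x) (x ⟨k, m⟩) := by
  refine (HasDerivAt.fun_sum (u := univ)
    fun e _ => (hasDerivAt_jointProb_update x ⟨k, m⟩ e).const_mul (g e)).congr_deriv ?_
  calc ∑ e, g e * ∑ s, jointProbExcept n B s x e * probSlope n ⟨k, m⟩ s.1 (e s)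
      = ∑ s : Slot B, ∑ e, g e * probSlope n ⟨k, m⟩ s.1 (e s) * jointProbExcept n B s x e := by
        simp only [mul_sum]
        rw [sum_comm]
        exact sum_congr rfl fun _ _ => sum_congr rfl fun _ _ => by ring
    _ = ∑ b : Fin (B k), ∑ e, g e * probSlope n ⟨k, m⟩ k (e ⟨k, b⟩)
          * jointProbExcept n B ⟨k, b⟩ x e := by
        rw [Fintype.sum_sigma, Fintype.sum_eq_single k fun k' hk' => by
          simp [probSlope_of_ne m hk']]
    _ = expectation n B (slotDiff B k m g) x := by
        unfold slotDiff
        simp only [expectation_sum, expectation_sub, probSlope_self, mul_sub,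
          sub_mul, sum_sub_distrib, sum_mul_ite_mul_jointProbExcept]

lemma pderiv_expectation (g : Choice n B → ℝ) (k : Fin K) (m : Fin (n k)) :
    pderiv n (expectation n B g) ⟨k, m⟩ = expectation n B (slotDiff B k m g) :=
  funext fun x => (hasDerivAt_expectation_update g k m x).deriv

end Expectation

section Chosen

variable {n B : Fin K → ℕ}

lemma chosen_update (e : Choice n B) {A : Finset (Slot B)} {s : Slot B} (hs : s ∈ A)
    (o : Option (Fin (n s.1))) :
    chosen n B (Function.update e s o) A
      = (o.map fun m => (⟨s.1, m⟩ : Elem n)).toFinset ∪ chosen n B e (A.erase s) := by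
  conv_lhs => rw [chosen, ← insert_erase hs, biUnion_insert, Function.update_self]
  exact congrArg _ (biUnion_congr rfl fun s' hs' => by
    rw [Function.update_of_ne (ne_of_mem_erase hs')])

lemma chosen_update_some (e : Choice n B) {A : Finset (Slot B)} {s : Slot B} (hs : s ∈ A)
    (m : Fin (n s.1)) :
    chosen n B (Function.update e s (some m)) A = insert ⟨s.1, m⟩ (chosen n B e (A.erase s)) := by
  rw [chosen_update e hs, insert_eq]
  rfl

lemma chosen_update_none (e : Choice n B) {A : Finset (Slot B)} {s : Slot B} (hs : s ∈ A) :
    chosen n B (Function.update e s none) A = chosen n B e (A.erase s) := by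
  simp [chosen_update e hs]

variable (n) in
def marg2 (f : Finset (Elem n) → ℝ) (v w : Elem n) (A : Finset (Elem n)) : ℝ :=
  marg n f v (insert w A) - marg n f v A

lemma slotDiff_slotDiff_chosen (f : Finset (Elem n) → ℝ) {k₁ k₂ : Fin K} (hk : k₁ ≠ k₂)
    (m₁ : Fin (n k₁)) (m₂ : Fin (n k₂)) :
    slotDiff B k₁ m₁ (slotDiff B k₂ m₂ fun e => f (chosen n B e univ))
      = fun e => ∑ b₁ : Fin (B k₁), ∑ b₂ : Fin (B k₂), marg2 n f ⟨k₁, m₁⟩ ⟨k₂, m₂⟩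
          (chosen n B e ((univ.erase ⟨k₂, b₂⟩).erase ⟨k₁, b₁⟩)) := by
  ext e
  refine sum_congr rfl fun b₁ _ => ?_
  rw [slotDiff, slotDiff, ← sum_sub_distrib]
  refine sum_congr rfl fun b₂ _ => ?_
  have hmem : (⟨k₁, b₁⟩ : Slot B) ∈ univ.erase ⟨k₂, b₂⟩ :=
    mem_erase.mpr ⟨fun h => hk (congrArg Sigma.fst h), mem_univ _⟩
  simp only [chosen_update_some _ (mem_univ _), chosen_update_none _ (mem_univ _),
    chosen_update_some _ hmem, chosen_update_none _ hmem, marg2, marg, insert_comm]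
  ring

end Chosen

section Swap

variable {n B : Fin K → ℕ}

variable (n) in
def swapSlots (k : Fin K) (b b' : Fin (B k)) (e : Choice n B) : Choice n B :=
  Function.update (Function.update e ⟨k, b⟩ (e ⟨k, b'⟩)) ⟨k, b'⟩ (e ⟨k, b⟩)

lemma swapSlots_apply {β : Type*} (P : ∀ k, Option (Fin (n k)) → β) (k : Fin K)
    (b b' : Fin (B k)) (e : Choice n B) (s : Slot B) :
    P s.1 (swapSlots n k b b' e s)
      = P (Equiv.swap ⟨k, b⟩ ⟨k, b'⟩ s).1 (e (Equiv.swap ⟨k, b⟩ ⟨k, b'⟩ s)) := by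
  unfold swapSlots
  by_cases h' : s = ⟨k, b'⟩
  · subst h'; rw [Equiv.swap_apply_right, Function.update_self]
  by_cases h : s = ⟨k, b⟩
  · subst h; rw [Equiv.swap_apply_left, Function.update_of_ne h', Function.update_self]
  · rw [Equiv.swap_apply_of_ne_of_ne h h', Function.update_of_ne h', Function.update_of_ne h]

lemma swapSlots_involutive (k : Fin K) (b b' : Fin (B k)) :
    Function.Involutive (swapSlots n k b b') := by
  intro e
  ext s : 1
  unfold swapSlots
  by_cases h' : s = ⟨k, b'⟩
  · subst h'; obtain rfl | hb := eq_or_ne b b' <;> simp [*]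
  by_cases h : s = ⟨k, b⟩
  · subst h; simp [Function.update_of_ne h']
  · simp [Function.update_of_ne h, Function.update_of_ne h']

lemma jointProb_swapSlots (x : Elem n → ℝ) (k : Fin K) (b b' : Fin (B k)) (e : Choice n B) :
    jointProb n B x (swapSlots n k b b' e) = jointProb n B x e := by
  simp only [jointProb, swapSlots_apply (prob n x)]
  exact Equiv.prod_comp (Equiv.swap _ _) fun s => prob n x s.1 (e s)

lemma chosen_swapSlots (k : Fin K) (b b' : Fin (B k)) (e : Choice n B) (A : Finset (Slot B)) :
    chosen n B (swapSlots n k b b' e) A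
      = chosen n B e (A.image (Equiv.swap ⟨k, b⟩ ⟨k, b'⟩)) := by
  rw [chosen, chosen, image_biUnion]
  exact biUnion_congr rfl fun s _ =>
    swapSlots_apply (fun k o => (o.map fun m => (⟨k, m⟩ : Elem n)).toFinset) k b b' e s

/-- Trials within one community are exchangeable. -/
lemma expectation_chosen_erase_erase (G : Finset (Elem n) → ℝ) (x : Elem n → ℝ)
    {s : Slot B} {k : Fin K} (hs : s.1 ≠ k) (b b' : Fin (B k)) :
    expectation n B (fun e => G (chosen n B e ((univ.erase s).erase ⟨k, b⟩))) x
      = expectation n B (fun e => G (chosen n B e ((univ.erase s).erase ⟨k, b'⟩))) x := by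
  have hσ : ((univ.erase s).erase ⟨k, b'⟩).image (Equiv.swap (⟨k, b'⟩ : Slot B) ⟨k, b⟩)
      = (univ.erase s).erase ⟨k, b⟩ := by
    rw [image_erase (Equiv.injective _), image_erase (Equiv.injective _), image_univ_equiv,
      Equiv.swap_apply_left, Equiv.swap_apply_of_ne_of_ne
        (fun h => hs (congrArg Sigma.fst h)) (fun h => hs (congrArg Sigma.fst h))]
  refine Fintype.sum_bijective _ (swapSlots_involutive k b' b).bijective _ _ fun e => ?_
  dsimp only
  rw [chosen_swapSlots, hσ, jointProb_swapSlots]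

end Swap

theorem multinoulliExtension_pderiv2_cross_general {K : ℕ} (n B : Fin K → ℕ)
    (hB : ∀ k, 0 < B k)
    (f : Finset (Elem n) → ℝ)
    (x : Elem n → ℝ)
    (k₁ k₂ : Fin K) (hk : k₁ ≠ k₂) (m₁ : Fin (n k₁)) (m₂ : Fin (n k₂)) :
    pderiv2 n (ME n B f) ⟨k₁, m₁⟩ ⟨k₂, m₂⟩ x =
      (B k₁ : ℝ) * (B k₂ : ℝ) * ∑ e : Choice n B,
        (marg n f ⟨k₁, m₁⟩
            (insert ⟨k₂, m₂⟩ (chosen n B e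
              ((Finset.univ.erase (⟨k₁, ⟨0, hB k₁⟩⟩ : Slot B)).erase
                (⟨k₂, ⟨0, hB k₂⟩⟩ : Slot B)))) -
          marg n f ⟨k₁, m₁⟩ (chosen n B e
            ((Finset.univ.erase (⟨k₁, ⟨0, hB k₁⟩⟩ : Slot B)).erase
              (⟨k₂, ⟨0, hB k₂⟩⟩ : Slot B)))) *
          jointProb n B x e := by
  let W : Finset (Slot B) → ℝ := fun A =>
    expectation n B (fun e => marg2 n f ⟨k₁, m₁⟩ ⟨k₂, m₂⟩ (chosen n B e A)) x
  calc pderiv2 n (ME n B f) ⟨k₁, m₁⟩ ⟨k₂, m₂⟩ x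
      = ∑ b₁ : Fin (B k₁), ∑ b₂ : Fin (B k₂), W ((univ.erase ⟨k₂, b₂⟩).erase ⟨k₁, b₁⟩) := by
        simp only [pderiv2, ME_eq_expectation, pderiv_expectation,
          slotDiff_slotDiff_chosen f hk, expectation_sum, W]
    _ = ∑ b₁ : Fin (B k₁), ∑ b₂ : Fin (B k₂),
          W ((univ.erase ⟨k₁, ⟨0, hB k₁⟩⟩).erase ⟨k₂, ⟨0, hB k₂⟩⟩) := by
        refine sum_congr rfl fun b₁ _ => sum_congr rfl fun b₂ _ => ?_
        simp only [W]
        rw [expectation_chosen_erase_erase (s := ⟨k₂, b₂⟩) _ x hk.symm b₁ ⟨0, hB k₁⟩,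
          erase_right_comm,
          expectation_chosen_erase_erase (s := ⟨k₁, _⟩) _ x hk b₂ ⟨0, hB k₂⟩]
    _ = _ := by
        simp only [sum_const, card_univ, Fintype.card_fin, nsmul_eq_mul, mul_assoc]
        rfl

theorem multinoulliExtension_pderiv2_cross {K : ℕ} (n B : Fin K → ℕ) (hn : ∀ k, 1 ≤ n k)
    (hB : ∀ k, 0 < B k) (hBn : ∀ k, B k ≤ n k)
    (f : Finset (Elem n) → ℝ) (hf0 : ∀ S, 0 ≤ f S)
    (x : Elem n → ℝ) (hx : InSimplex n x)
    (k₁ k₂ : Fin K) (hk : k₁ ≠ k₂) (m₁ : Fin (n k₁)) (m₂ : Fin (n k₂)) :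
    pderiv2 n (ME n B f) ⟨k₁, m₁⟩ ⟨k₂, m₂⟩ x =
      (B k₁ : ℝ) * (B k₂ : ℝ) * ∑ e : Choice n B,
        (marg n f ⟨k₁, m₁⟩
            (insert ⟨k₂, m₂⟩ (chosen n B e
              ((Finset.univ.erase (⟨k₁, ⟨0, hB k₁⟩⟩ : Slot B)).erase
                (⟨k₂, ⟨0, hB k₂⟩⟩ : Slot B)))) -
          marg n f ⟨k₁, m₁⟩ (chosen n B e
            ((Finset.univ.erase (⟨k₁, ⟨0, hB k₁⟩⟩ : Slot B)).erase
              (⟨k₂, ⟨0, hB k₂⟩⟩ : Slot B)))) *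
          jointProb n B x e :=
  multinoulliExtension_pderiv2_cross_general n B hB f x k₁ k₂ hk m₁ m₂

end Multinoulli
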